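/- arXiv:2506.16433 — 3 statements merged into one kernel-verified Lean document; each statement's English description precedes it below -/
import Mathlib

section
/- If f : ℕ → ℕ is monotone, (B¹, B⁰) is a downset located complemented subset of ℕ, and f maps onto B¹ (every element of B¹ is f(w) for some w), then the preimage complemented subset (f⁻¹(B¹), f⁻¹(B⁰)) is downset located. -/
theorem stmt_15 (f : ℕ → ℕ) (hmono : ∀ x y : ℕ, x < y → f x < f y)
    (B1 B0 : Set ℕ) (hdisj : ∀ x ∈ B1, ∀ y ∈ B0, x ≠ y)
    (hloc : ∀ x ∈ B1, (∀ y ∈ B1 ∪ B0, y < x → y ∈ B0) ∨ ∃ y ∈ B1, y < x)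
    (honto : ∀ b ∈ B1, ∃ w, f w = b) :
    ∀ x ∈ f ⁻¹' B1,
      (∀ y ∈ f ⁻¹' B1 ∪ f ⁻¹' B0, y < x → y ∈ f ⁻¹' B0) ∨
        ∃ y ∈ f ⁻¹' B1, y < x := by
  intro x hx
  rcases hloc (f x) hx with h | ⟨b, hb, hbx⟩
  · left
    intro y hy hyx
    exact h (f y) (by rcases hy with h1 | h0 <;> [exact Or.inl h1; exact Or.inr h0])
      (hmono y x hyx)
  · right
    obtain ⟨w, hw⟩ := honto b hb
    refine ⟨w, by simpa [Set.mem_preimage, hw] using hb, ?_⟩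
    by_contra hlt
    push_neg at hlt
    rcases lt_or_eq_of_le hlt with h | h
    · exact absurd (hmono x w h) (by omega)
    · subst h; omega
end

section
/- If (X, <_X) and (Y, <_Y) are ∃-well-founded sets, then X × Y with the componentwise order (x,y) < (x',y') iff x <_X x' and y <_Y y' is ∃-well-founded; moreover if Z has a relation-preserving strongly extensional map into an ∃-well-founded set, Z is ∃-well-founded. -/
def EWF {X : Type*} (lt : X → X → Prop) : Prop :=
  ∀ Q P : X → Prop, (∃ x, Q x) → (∀ x, Q x → P x ∨ ∃ x', lt x' x ∧ Q x') → ∃ x, P x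

theorem stmt_18 {X Y : Type*} (ltX : X → X → Prop) (ltY : Y → Y → Prop)
    (hX : EWF ltX) (hY : EWF ltY) :
    EWF (fun p q : X × Y => ltX p.1 q.1 ∧ ltY p.2 q.2) ∧
      ∀ {Z : Type*} (ltZ : Z → Z → Prop) (f : Z → X),
        (∀ z z', ltZ z z' → ltX (f z) (f z')) → EWF ltZ := by
  constructor
  · intro Q P hQ hstep
    obtain ⟨⟨x0, y0⟩, hQ0⟩ := hQ
    have := hY (fun y => ∃ x, Q (x, y)) (fun _ => ∃ p, P p) ⟨y0, x0, hQ0⟩ ?_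
    · obtain ⟨_, hp⟩ := this
      exact hp
    · rintro y ⟨x, hxy⟩
      rcases hstep (x, y) hxy with hP | ⟨⟨x', y'⟩, ⟨_, hy⟩, hQ'⟩
      · exact Or.inl ⟨(x, y), hP⟩
      · exact Or.inr ⟨y', hy, x', hQ'⟩
  · intro Z ltZ f hf Q P hQ hstep
    obtain ⟨z0, hQ0⟩ := hQ
    have := hX (fun x => ∃ z, f z = x ∧ Q z) (fun _ => ∃ z, P z) ⟨f z0, z0, rfl, hQ0⟩ ?_
    · obtain ⟨_, hp⟩ := this
      exact hp
    · rintro x ⟨z, rfl, hz⟩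
      rcases hstep z hz with hP | ⟨z', hlt, hQ'⟩
      · exact Or.inl ⟨z, hP⟩
      · exact Or.inr ⟨f z', hf z' z hlt, z', rfl, hQ'⟩
end

section
/- If (X, <_X) and (Y, <_Y) are ∃-well-founded sets, then X × Y with the lexicographic order, (x,y) <_lex (x',y') iff x <_X x' or (x = x' and y <_Y y'), is an ∃-well-founded set. -/
lemma EWF_min {X : Type*} {lt : X → X → Prop} (h : EWF lt) (Q : X → Prop)
    (hQ : ∃ x, Q x) : ∃ x, Q x ∧ ∀ x', lt x' x → ¬ Q x' := by
  apply h Q _ hQ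
  intro x hx
  by_cases hm : ∃ x', lt x' x ∧ Q x'
  · exact Or.inr hm
  · exact Or.inl ⟨hx, fun x' hl hq => hm ⟨x', hl, hq⟩⟩

lemma min_EWF {X : Type*} {lt : X → X → Prop}
    (h : ∀ Q : X → Prop, (∃ x, Q x) → ∃ x, Q x ∧ ∀ x', lt x' x → ¬ Q x') :
    EWF lt := by
  intro Q P hQ hstep
  obtain ⟨x, hx, hmin⟩ := h Q hQ
  rcases hstep x hx with hp | ⟨x', hl, hq⟩
  · exact ⟨x, hp⟩
  · exact absurd hq (hmin x' hl)

theorem stmt_19 {X Y : Type*} (ltX : X → X → Prop) (ltY : Y → Y → Prop)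
    (hX : EWF ltX) (hY : EWF ltY) :
    EWF (fun p q : X × Y => ltX p.1 q.1 ∨ (p.1 = q.1 ∧ ltY p.2 q.2)) := by
  apply min_EWF
  intro Q hQ
  obtain ⟨⟨a, b⟩, hab⟩ := hQ
  obtain ⟨x0, ⟨y, hxy⟩, hxmin⟩ := EWF_min hX (fun x => ∃ y, Q (x, y)) ⟨a, b, hab⟩
  obtain ⟨y0, hy0, hymin⟩ := EWF_min hY (fun y => Q (x0, y)) ⟨y, hxy⟩
  refine ⟨(x0, y0), hy0, ?_⟩
  rintro ⟨x', y'⟩ (hl | ⟨heq, hl⟩) hq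
  · exact hxmin x' hl ⟨y', hq⟩
  · exact hymin y' hl (by simp only [] at heq; rwa [heq] at hq)
end
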